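/- (Uniqueness via truncation) Let k be a field, E ∈ k[t,y] irreducible over k(t) with deg_t E = h, deg_y E = d ≥ 1, and let f ∈ k[[t]] be a root of E with E_y(t,f) ≠ 0 in k((t)). If Q ∈ k[t,y] has deg_t Q < h and deg_y Q < d, and the power series Q(t,f)/E_y(t,f) ≡ 0 (mod t^{2dh}), then Q = 0. -/

import Mathlib

noncomputable section

/-- The canonical map `k[t] →+* k⟦t⟧`. -/
def polyToSeries (k : Type*) [Field k] : Polynomial k →+* PowerSeries k :=
  Polynomial.eval₂RingHom (PowerSeries.C : k →+* PowerSeries k) PowerSeries.X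

/-- The canonical map `k[t] →+* k((t))`. -/
def polyToLaurent (k : Type*) [Field k] : Polynomial k →+* LaurentSeries k :=
  (HahnSeries.ofPowerSeries ℤ k).comp (polyToSeries k)

/-- Evaluation of `P ∈ k[t][y]` at `y = f` inside `k((t))`. -/
def evalAt (k : Type*) [Field k] (f : PowerSeries k) (P : Polynomial (Polynomial k)) :
    LaurentSeries k :=
  Polynomial.eval₂ (polyToLaurent k) (HahnSeries.ofPowerSeries ℤ k f) P

/-! If `Q ≠ 0`, then `E` and `Q` are coprime over `k(t)`, so their resultant `c ∈ k[t]` is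
nonzero and `c = E A + Q B` for some `A, B ∈ k[t][y]`. The resultant is a Sylvester determinant
whose columns have `t`-degree at most `h` or `h - 1`, so `deg c ≤ d (h - 1) + deg_y Q · h < 2dh`.
Substituting `y = f` kills `E` and gives `c = (Q(f)/E_y(f)) · E_y(f) · B(f)`, a product of series
of order `≥ 0`, the first of order `≥ 2dh`; hence `t^{2dh} ∣ c`, which is impossible. -/

open Polynomial HahnSeries

lemma natDegree_det_le {R n : Type*} [CommRing R] [Fintype n] [DecidableEq n]
    (M : Matrix n n R[X]) (b : n → ℕ) (hM : ∀ i j, (M i j).natDegree ≤ b j) :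
    M.det.natDegree ≤ ∑ j, b j := by
  rw [Matrix.det_apply']
  refine natDegree_sum_le_of_forall_le _ _ fun σ _ => ?_
  refine (natDegree_mul_le).trans ?_
  rw [natDegree_intCast, zero_add]
  exact (natDegree_prod_le _ _).trans (Finset.sum_le_sum fun j _ => hM _ _)

lemma natDegree_resultant_le {R : Type*} [CommRing R] (f g : R[X][X]) (m n a b : ℕ)
    (hf : ∀ i, (f.coeff i).natDegree ≤ a) (hg : ∀ i, (g.coeff i).natDegree ≤ b) :
    (resultant f g m n).natDegree ≤ m * b + n * a := by
  classical
  refine (natDegree_det_le _ (Fin.addCases (fun _ => b) (fun _ => a)) fun i j => ?_).trans ?_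
  · induction j using Fin.addCases with
    | left j => simp only [sylvester, Matrix.of_apply, Fin.addCases_left]; split_ifs <;> simp [hg]
    | right j => simp only [sylvester, Matrix.of_apply, Fin.addCases_right]; split_ifs <;> simp [hf]
  · simp [Fin.sum_univ_add]

lemma natDegree_le_pred_of_degree_lt {R : Type*} [Semiring R] {p : R[X]} {n : ℕ}
    (hp : p.degree < n) : p.natDegree ≤ n - 1 := by
  rcases eq_or_ne p 0 with rfl | hp0
  · simp
  · exact Nat.le_sub_one_of_lt ((natDegree_lt_iff_degree_lt hp0).mpr hp)

lemma resultant_ne_zero_of_irreducible_map {A K : Type*} [CommRing A] [IsDomain A] [Field K]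
    [Algebra A K] [IsFractionRing A K] {f g : A[X]}
    (hf : Irreducible (f.map (algebraMap A K))) (hg : g ≠ 0) (hfg : g.natDegree < f.natDegree) :
    resultant f g ≠ 0 := by
  have hinj : Function.Injective (algebraMap A K) := IsFractionRing.injective A K
  have hdvd : ¬ f.map (algebraMap A K) ∣ g.map (algebraMap A K) := fun hdvd => by
    have := natDegree_le_of_dvd hdvd ((Polynomial.map_ne_zero_iff hinj).mpr hg)
    rw [natDegree_map_eq_of_injective hinj, natDegree_map_eq_of_injective hinj] at this
    omega
  have := resultant_ne_zero _ _ ((hf.coprime_iff_not_dvd).mpr hdvd)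
  rwa [natDegree_map_eq_of_injective hinj, natDegree_map_eq_of_injective hinj,
    resultant_map_map, map_ne_zero_iff _ hinj] at this

lemma zero_le_orderTop_ofPowerSeries {R : Type*} [Semiring R] (x : PowerSeries R) :
    0 ≤ (ofPowerSeries ℤ R x).orderTop :=
  le_orderTop_iff_forall.mpr fun j hj => by
    rw [ofPowerSeries_apply]
    refine embDomain_of_notMem_range fun ⟨n, hn⟩ => ?_
    have : (0 : ℤ) ≤ j := hn ▸ n.cast_nonneg
    exact absurd hj (not_lt.mpr (by exact_mod_cast this))

section evalAt

variable {k : Type*} [Field k]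

lemma polyToLaurent_eq_ofPowerSeries (p : k[X]) :
    polyToLaurent k p = ofPowerSeries ℤ k (p : PowerSeries k) :=
  congrArg (ofPowerSeries ℤ k) (eval₂_C_X_eq_coe (φ := p))

lemma orderTop_polyToLaurent_le_natDegree {p : k[X]} (hp : p ≠ 0) :
    (polyToLaurent k p).orderTop ≤ p.natDegree := by
  refine orderTop_le_of_coeff_ne_zero ?_
  rwa [polyToLaurent_eq_ofPowerSeries, ofPowerSeries_apply_coeff, coeff_coe,
    ← Polynomial.leadingCoeff, Polynomial.leadingCoeff_ne_zero]

lemma evalAt_eq_ofPowerSeries (f : PowerSeries k) (P : k[X][X]) :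
    evalAt k f P = ofPowerSeries ℤ k (P.eval₂ (polyToSeries k) f) :=
  (hom_eval₂ P (polyToSeries k) (ofPowerSeries ℤ k) f).symm

lemma zero_le_orderTop_evalAt (f : PowerSeries k) (P : k[X][X]) :
    0 ≤ (evalAt k f P).orderTop :=
  evalAt_eq_ofPowerSeries f P ▸ zero_le_orderTop_ofPowerSeries _

lemma le_natDegree_of_polyToLaurent_eq_evalAt_mul {f : PowerSeries k} {P D q : k[X][X]}
    {c : k[X]} {N : ℤ} (hc : c ≠ 0) (hD : evalAt k f D ≠ 0)
    (hcP : polyToLaurent k c = evalAt k f P * evalAt k f q)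
    (hvan : ∀ n < N, (evalAt k f P / evalAt k f D).coeff n = 0) :
    N ≤ c.natDegree := by
  have hquot : (N : WithTop ℤ) ≤ (evalAt k f P / evalAt k f D).orderTop :=
    le_orderTop_iff_forall.mpr fun n hn => hvan n (by exact_mod_cast hn)
  have hfactor : polyToLaurent k c =
      evalAt k f P / evalAt k f D * evalAt k f D * evalAt k f q := by
    rw [div_mul_cancel₀ _ hD, hcP]
  have hord : (N : WithTop ℤ) ≤ (polyToLaurent k c).orderTop := by
    rw [hfactor, orderTop_mul, orderTop_mul]
    exact le_add_of_le_of_nonneg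
      (le_add_of_le_of_nonneg hquot (zero_le_orderTop_evalAt f D)) (zero_le_orderTop_evalAt f q)
  exact_mod_cast hord.trans (orderTop_polyToLaurent_le_natDegree hc)

end evalAt

theorem uniqueness_via_truncation_general (k : Type*) [Field k] (h d : ℕ)
    (E : Polynomial (Polynomial k))
    (hirr : Irreducible (E.map (algebraMap (Polynomial k) (RatFunc k))))
    (hEy : E.natDegree = d)
    (hEt : ∀ i, (E.coeff i).degree ≤ (h : WithBot ℕ))
    (f : PowerSeries k)
    (hroot : Polynomial.eval₂ (polyToSeries k) f E = 0)
    (hsimple : evalAt k f (Polynomial.derivative E) ≠ 0)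
    (Q : Polynomial (Polynomial k))
    (hQt : ∀ i, (Q.coeff i).degree < (h : WithBot ℕ))
    (hQy : Q.degree < (d : WithBot ℕ))
    (hvan : ∀ n : ℤ, n < 2 * d * h →
      (evalAt k f Q / evalAt k f (Polynomial.derivative E)).coeff n = 0) :
    Q = 0 := by
  subst hEy
  by_contra hQ
  have hh : 0 < h := Nat.pos_of_ne_zero fun h0 => hQ (by ext1 i; simpa [h0] using hQt i)
  have hQE : Q.natDegree < E.natDegree := (natDegree_lt_iff_degree_lt hQ).mpr hQy
  obtain ⟨p, q, -, -, hpq⟩ := exists_mul_add_mul_eq_C_resultant E Q le_rfl le_rfl (by omega)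
  have hres : resultant E Q ≠ 0 := resultant_ne_zero_of_irreducible_map hirr hQ hQE
  have hdeg : (resultant E Q).natDegree ≤ E.natDegree * (h - 1) + Q.natDegree * h :=
    natDegree_resultant_le E Q _ _ h (h - 1) (fun i => natDegree_le_of_degree_le (hEt i))
      (fun i => natDegree_le_pred_of_degree_lt (hQt i))
  have hE : evalAt k f E = 0 := by rw [evalAt_eq_ofPowerSeries, hroot, map_zero]
  have heval : polyToLaurent k (resultant E Q) = evalAt k f Q * evalAt k f q := by
    have := congrArg (evalAt k f) hpq
    simp only [evalAt, eval₂_add, eval₂_mul, eval₂_C] at this hE ⊢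
    rw [← this, hE, zero_mul, zero_add]
  have hlow : 2 * E.natDegree * h ≤ (resultant E Q).natDegree := by
    exact_mod_cast le_natDegree_of_polyToLaurent_eq_evalAt_mul hres hsimple heval hvan
  have hbound : E.natDegree * (h - 1) + Q.natDegree * h < 2 * E.natDegree * h := by
    have hQh := Nat.mul_lt_mul_of_pos_right hQE hh
    have hEh := Nat.mul_le_mul_left E.natDegree (Nat.sub_le h 1)
    rw [mul_assoc, two_mul]
    omega
  omega

/-- **uniqueness via truncation.**  Let `k` be a field,
`E ∈ k[t,y]` irreducible over `k(t)` with `deg_t E = h`, `deg_y E = d ≥ 1`, and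
let `f ∈ k⟦t⟧` be a root of `E` with `E_y(t,f) ≠ 0` in `k((t))`.  If
`Q ∈ k[t,y]` has `deg_t Q < h`, `deg_y Q < d`, and the Laurent series
`Q(t,f)/E_y(t,f)` vanishes to order `≥ 2dh` (i.e. all its coefficients of index
`< 2dh` vanish), then `Q = 0`. -/
theorem uniqueness_via_truncation (k : Type*) [Field k] (h d : ℕ) (hd : 1 ≤ d)
    (E : Polynomial (Polynomial k))
    (hirr : Irreducible (E.map (algebraMap (Polynomial k) (RatFunc k))))
    (hEy : E.natDegree = d)
    (hEt : ∀ i, (E.coeff i).degree ≤ (h : WithBot ℕ))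
    (f : PowerSeries k)
    (hroot : Polynomial.eval₂ (polyToSeries k) f E = 0)
    (hsimple : evalAt k f (Polynomial.derivative E) ≠ 0)
    (Q : Polynomial (Polynomial k))
    (hQt : ∀ i, (Q.coeff i).degree < (h : WithBot ℕ))
    (hQy : Q.degree < (d : WithBot ℕ))
    (hvan : ∀ n : ℤ, n < 2 * d * h →
      (evalAt k f Q / evalAt k f (Polynomial.derivative E)).coeff n = 0) :
    Q = 0 :=
  uniqueness_via_truncation_general k h d E hirr hEy hEt f hroot hsimple Q hQt hQy hvan
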